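/- arXiv:2501.16593 — 3 statements merged into one kernel-verified Lean document; each statement's English description precedes it below -/
import Mathlib

section
/- Let A be the companion matrix of X^4 - 2X^3 - 2X + 1 acting on ℝ^4, and set H := ker(A² + (√3 - 1)A + I₄) and E := ker(A² - (√3 + 1)A + I₄). Then ℝ^4 is the internal direct sum of H and E, both H and E have dimension 2, and both subspaces are invariant under A. -/
open Matrix

/-- The companion matrix `A` of `X^4 - 2X^3 - 2X + 1`, viewed over `ℝ`. -/
def A : Matrix (Fin 4) (Fin 4) ℝ :=
  !![0, 0, 0, -1; 1, 0, 0, 2; 0, 1, 0, 0; 0, 0, 1, 2]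

/-- `A` as a linear endomorphism of `ℝ^4`. -/
def f : Module.End ℝ (Fin 4 → ℝ) := Matrix.mulVecLin A

/-- `H = ker (A² + (√3 - 1)A + I)`. -/
noncomputable def H : Submodule ℝ (Fin 4 → ℝ) := LinearMap.ker (f ^ 2 + (Real.sqrt 3 - 1) • f + 1)

/-- `E = ker (A² - (√3 + 1)A + I)`. -/
noncomputable def E : Submodule ℝ (Fin 4 → ℝ) := LinearMap.ker (f ^ 2 - (Real.sqrt 3 + 1) • f + 1)

/-- `P(s) = A² + (s-1)A + I`, written out. -/
def Pm (s : ℝ) : Matrix (Fin 4) (Fin 4) ℝ :=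
  !![1, 0, -1, -1-s; -1+s, 1, 2, 1+2*s; 1, -1+s, 1, 2; 0, 1, 1+s, 3+2*s]

/-- `Q(s) = A² - (s+1)A + I`, written out. -/
def Qm (s : ℝ) : Matrix (Fin 4) (Fin 4) ℝ :=
  !![1, 0, -1, -1+s; -1-s, 1, 2, 1-2*s; 1, -1-s, 1, 2; 0, 1, 1-s, 3-2*s]

/-- `V(s) = A + (s-1)I`, written out. -/
def Vm (s : ℝ) : Matrix (Fin 4) (Fin 4) ℝ :=
  !![-1+s, 0, 0, -1; 1, -1+s, 0, 2; 0, 1, -1+s, 0; 0, 0, 1, 1+s]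

set_option maxHeartbeats 3000000 in
lemma J1 (s : ℝ) (hs : s ^ 2 = 3) : Pm s * (Vm s * Qm s) = 0 := by
  have hs3 : s ^ 3 = 3 * s := by rw [pow_succ, hs]
  have hs4 : s ^ 4 = 9 := by rw [pow_succ, hs3]; nlinarith [hs]
  ext i j
  fin_cases i <;> fin_cases j <;>
    simp [Pm, Qm, Vm, Matrix.mul_apply, Fin.sum_univ_four, Matrix.vecHead, Matrix.vecTail] <;>
    ring_nf <;> (try simp [hs, hs3, hs4]) <;> (try ring) <;> (try norm_num)

set_option maxHeartbeats 3000000 in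
lemma J2 (s : ℝ) (hs : s ^ 2 = 3) : Qm s * Pm s = 0 := by
  have hs3 : s ^ 3 = 3 * s := by rw [pow_succ, hs]
  have hs4 : s ^ 4 = 9 := by rw [pow_succ, hs3]; nlinarith [hs]
  ext i j
  fin_cases i <;> fin_cases j <;>
    simp [Pm, Qm, Matrix.mul_apply, Fin.sum_univ_four, Matrix.vecHead, Matrix.vecTail] <;>
    ring_nf <;> (try simp [hs, hs3, hs4]) <;> (try ring) <;> (try norm_num)

set_option maxHeartbeats 3000000 in
lemma J3 (s : ℝ) (hs : s ^ 2 = 3) : Qm s * (Vm s * Pm s) = 0 := by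
  have hs3 : s ^ 3 = 3 * s := by rw [pow_succ, hs]
  have hs4 : s ^ 4 = 9 := by rw [pow_succ, hs3]; nlinarith [hs]
  ext i j
  fin_cases i <;> fin_cases j <;>
    simp [Pm, Qm, Vm, Matrix.mul_apply, Fin.sum_univ_four, Matrix.vecHead, Matrix.vecTail] <;>
    ring_nf <;> (try simp [hs, hs3, hs4]) <;> (try ring) <;> (try norm_num)

set_option maxHeartbeats 3000000 in
lemma J4 (s : ℝ) (hs : s ^ 2 = 3) :
    (s/6) • (Vm s * Qm s) + Pm s - (s/6) • (Vm s * Pm s) = 1 := by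
  have hs3 : s ^ 3 = 3 * s := by rw [pow_succ, hs]
  have hs4 : s ^ 4 = 9 := by rw [pow_succ, hs3]; nlinarith [hs]
  ext i j
  fin_cases i <;> fin_cases j <;>
    simp [Pm, Qm, Vm, Matrix.mul_apply, Fin.sum_univ_four, Matrix.one_apply,
      Matrix.vecHead, Matrix.vecTail] <;>
    ring_nf <;> (try simp [hs, hs3, hs4]) <;> (try ring) <;> (try norm_num)

set_option maxHeartbeats 3000000 in
lemma J5 (s : ℝ) : Pm s * A = A * Pm s := by
  ext i j
  fin_cases i <;> fin_cases j <;>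
    simp [Pm, A, Matrix.mul_apply, Fin.sum_univ_four, Matrix.vecHead, Matrix.vecTail] <;>
    ring_nf

set_option maxHeartbeats 3000000 in
lemma J6 (s : ℝ) : Qm s * A = A * Qm s := by
  ext i j
  fin_cases i <;> fin_cases j <;>
    simp [Qm, A, Matrix.mul_apply, Fin.sum_univ_four, Matrix.vecHead, Matrix.vecTail] <;>
    ring_nf

lemma appP (x : Fin 4 → ℝ) :
    (f ^ 2 + (Real.sqrt 3 - 1) • f + 1 : Module.End ℝ (Fin 4 → ℝ)) x
      = (Pm (Real.sqrt 3)) *ᵥ x := by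
  have hf : ∀ y : Fin 4 → ℝ, f y = A *ᵥ y := fun y => rfl
  simp only [LinearMap.add_apply, LinearMap.smul_apply, Module.End.one_apply, pow_two,
    Module.End.mul_apply, hf]
  funext i
  fin_cases i <;>
    simp [A, Pm, Matrix.mulVec, dotProduct, Fin.sum_univ_four, Pi.smul_apply,
      Matrix.vecHead, Matrix.vecTail] <;> ring

lemma appQ (x : Fin 4 → ℝ) :
    (f ^ 2 - (Real.sqrt 3 + 1) • f + 1 : Module.End ℝ (Fin 4 → ℝ)) x
      = (Qm (Real.sqrt 3)) *ᵥ x := by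
  have hf : ∀ y : Fin 4 → ℝ, f y = A *ᵥ y := fun y => rfl
  simp only [LinearMap.add_apply, LinearMap.sub_apply, LinearMap.smul_apply, Module.End.one_apply,
    pow_two, Module.End.mul_apply, hf]
  funext i
  fin_cases i <;>
    simp [A, Qm, Matrix.mulVec, dotProduct, Fin.sum_univ_four, Pi.smul_apply,
      Matrix.vecHead, Matrix.vecTail] <;> ring

lemma memH (x : Fin 4 → ℝ) : x ∈ H ↔ (Pm (Real.sqrt 3)) *ᵥ x = 0 := by
  rw [H, LinearMap.mem_ker, appP]

lemma memE (x : Fin 4 → ℝ) : x ∈ E ↔ (Qm (Real.sqrt 3)) *ᵥ x = 0 := by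
  rw [E, LinearMap.mem_ker, appQ]

lemma vecP1 (s : ℝ) (hs : s ^ 2 = 3) : Pm s *ᵥ ![1, -1 - s, 1, 0] = 0 := by
  funext i
  fin_cases i <;>
    simp [Pm, Matrix.mulVec, dotProduct, Fin.sum_univ_four,
      Matrix.vecHead, Matrix.vecTail] <;>
    ring_nf <;> (try simp [hs]) <;> (try ring) <;> (try norm_num)

lemma vecP2 (s : ℝ) (hs : s ^ 2 = 3) : Pm s *ᵥ ![1 + s, -3 - 2 * s, 0, 1] = 0 := by
  funext i
  fin_cases i <;>
    simp [Pm, Matrix.mulVec, dotProduct, Fin.sum_univ_four,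
      Matrix.vecHead, Matrix.vecTail] <;>
    ring_nf <;> (try simp [hs]) <;> (try ring) <;> (try norm_num)

lemma vecQ1 (s : ℝ) (hs : s ^ 2 = 3) : Qm s *ᵥ ![1, s - 1, 1, 0] = 0 := by
  funext i
  fin_cases i <;>
    simp [Qm, Matrix.mulVec, dotProduct, Fin.sum_univ_four,
      Matrix.vecHead, Matrix.vecTail] <;>
    ring_nf <;> (try simp [hs]) <;> (try ring) <;> (try norm_num)

lemma vecQ2 (s : ℝ) (hs : s ^ 2 = 3) : Qm s *ᵥ ![1 - s, 2 * s - 3, 0, 1] = 0 := by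
  funext i
  fin_cases i <;>
    simp [Qm, Matrix.mulVec, dotProduct, Fin.sum_univ_four,
      Matrix.vecHead, Matrix.vecTail] <;>
    ring_nf <;> (try simp [hs]) <;> (try ring) <;> (try norm_num)

lemma finrank_ge_two {W : Submodule ℝ (Fin 4 → ℝ)} (v w : Fin 4 → ℝ)
    (hv : v ∈ W) (hw : w ∈ W) (hli : LinearIndependent ℝ ![v, w]) :
    2 ≤ Module.finrank ℝ W := by
  have hle : Submodule.span ℝ (Set.range ![v, w]) ≤ W := by
    rw [Submodule.span_le]
    rintro _ ⟨i, rfl⟩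
    fin_cases i <;> simpa using (by assumption : _ ∈ W)
  have := Submodule.finrank_mono hle
  rwa [finrank_span_eq_card hli, Fintype.card_fin] at this

/-- `ℝ^4` is the internal direct sum of `H` and `E`, both have dimension `2`, and both are
invariant under `A`. -/
theorem stmt_8 :
    IsCompl H E ∧ Module.finrank ℝ H = 2 ∧ Module.finrank ℝ E = 2 ∧
      (∀ x ∈ H, f x ∈ H) ∧ (∀ x ∈ E, f x ∈ E) := by
  set s := Real.sqrt 3 with hsdef
  have hs : s ^ 2 = 3 := Real.sq_sqrt (by norm_num)
  have hf : ∀ y : Fin 4 → ℝ, f y = A *ᵥ y := fun y => rfl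
  -- Direct sum
  have hdisj : Disjoint H E := by
    rw [disjoint_iff]
    ext x
    simp only [Submodule.mem_inf, Submodule.mem_bot, memH, memE]
    constructor
    · rintro ⟨hxH, hxE⟩
      have h4 := congrArg (fun M => M *ᵥ x) (J4 s hs)
      simp only [Matrix.add_mulVec, Matrix.sub_mulVec, Matrix.smul_mulVec,
        Matrix.one_mulVec, ← Matrix.mulVec_mulVec] at h4
      rw [hxH, hxE] at h4
      simpa using h4.symm
    · rintro rfl
      simp [Matrix.mulVec_zero]
  have hcodisj : Codisjoint H E := by
    rw [codisjoint_iff_le_sup]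
    intro x _
    have h4 := congrArg (fun M => M *ᵥ x) (J4 s hs)
    simp only [Matrix.add_mulVec, Matrix.sub_mulVec, Matrix.smul_mulVec,
      Matrix.one_mulVec] at h4
    have hy : (s/6) • ((Vm s * Qm s) *ᵥ x) ∈ H := by
      rw [memH, Matrix.mulVec_smul, Matrix.mulVec_mulVec, J1 s hs]
      simp
    have hz : (Pm s *ᵥ x) - (s/6) • ((Vm s * Pm s) *ᵥ x) ∈ E := by
      rw [memE, Matrix.mulVec_sub, Matrix.mulVec_smul, Matrix.mulVec_mulVec,
        Matrix.mulVec_mulVec, J2 s hs, J3 s hs]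
      simp
    refine Submodule.mem_sup.2 ⟨_, hy, _, hz, ?_⟩
    rw [add_sub_assoc] at h4
    exact h4
  have hcompl : IsCompl H E := ⟨hdisj, hcodisj⟩
  -- invariance
  have hinvH : ∀ x ∈ H, f x ∈ H := by
    intro x hx
    rw [memH] at hx ⊢
    rw [hf, Matrix.mulVec_mulVec, J5 s, ← Matrix.mulVec_mulVec, hx, Matrix.mulVec_zero]
  have hinvE : ∀ x ∈ E, f x ∈ E := by
    intro x hx
    rw [memE] at hx ⊢
    rw [hf, Matrix.mulVec_mulVec, J6 s, ← Matrix.mulVec_mulVec, hx, Matrix.mulVec_zero]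
  -- dimensions
  have hliH : LinearIndependent ℝ ![(![1, -1 - s, 1, 0] : Fin 4 → ℝ), ![1 + s, -3 - 2 * s, 0, 1]] := by
    rw [LinearIndependent.pair_iff]
    intro a b hab
    have h2 := congrFun hab 2
    have h3 := congrFun hab 3
    simp at h2 h3
    exact ⟨h2, h3⟩
  have hliE : LinearIndependent ℝ ![(![1, s - 1, 1, 0] : Fin 4 → ℝ), ![1 - s, 2 * s - 3, 0, 1]] := by
    rw [LinearIndependent.pair_iff]
    intro a b hab
    have h2 := congrFun hab 2
    have h3 := congrFun hab 3
    simp at h2 h3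
    exact ⟨h2, h3⟩
  have hH2 : 2 ≤ Module.finrank ℝ H :=
    finrank_ge_two _ _ ((memH _).2 (vecP1 s hs)) ((memH _).2 (vecP2 s hs)) hliH
  have hE2 : 2 ≤ Module.finrank ℝ E :=
    finrank_ge_two _ _ ((memE _).2 (vecQ1 s hs)) ((memE _).2 (vecQ2 s hs)) hliE
  have hsum : Module.finrank ℝ H + Module.finrank ℝ E = 4 := by
    rw [Submodule.finrank_add_eq_of_isCompl hcompl]
    simp
  refine ⟨hcompl, by omega, by omega, hinvH, hinvE⟩
end

section
/- Let A be the companion matrix of X^4 - 2X^3 - 2X + 1 acting on ℝ^4, H := ker(A² + (√3 - 1)A + I₄) and E := ker(A² - (√3 + 1)A + I₄). There exists a symmetric bilinear form b on ℝ^4 which is positive semidefinite, whose kernel (radical) is exactly E, which is positive definite when restricted to H, and which is invariant under A, i.e. b(Ax, Ay) = b(x, y) for all x, y ∈ ℝ^4. In particular b has rank 2. -/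
open Matrix

noncomputable def s : ℝ := Real.sqrt 3

lemma hs0 : (0:ℝ) ≤ s := Real.sqrt_nonneg 3

lemma hs : s * s = 3 := Real.mul_self_sqrt (by norm_num)

/-- the Gram matrix of our invariant bilinear form -/
noncomputable def Bm : Matrix (Fin 4) (Fin 4) ℝ :=
  !![2, 1-s, 2-2*s, 7-3*s; 1-s, 2, 1-s, 2-2*s; 2-2*s, 1-s, 2, 1-s; 7-3*s, 2-2*s, 1-s, 2]

noncomputable def bF : LinearMap.BilinForm ℝ (Fin 4 → ℝ) := Matrix.toLinearMap₂' ℝ Bm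

lemma b_apply (x y : Fin 4 → ℝ) : bF x y = (2:ℝ)*x 3*y 3 + x 3*y 2 + (2:ℝ)*x 3*y 1 + (7:ℝ)*x 3*y 0 + x 2*y 3 + (2:ℝ)*x 2*y 2 + x 2*y 1 + (2:ℝ)*x 2*y 0 + (2:ℝ)*x 1*y 3 + x 1*y 2 + (2:ℝ)*x 1*y 1 + x 1*y 0 + (7:ℝ)*x 0*y 3 + (2:ℝ)*x 0*y 2 + x 0*y 1 + (2:ℝ)*x 0*y 0 + (-1:ℝ)*s*x 3*y 2 + (-2:ℝ)*s*x 3*y 1 + (-3:ℝ)*s*x 3*y 0 + (-1:ℝ)*s*x 2*y 3 + (-1:ℝ)*s*x 2*y 1 + (-2:ℝ)*s*x 2*y 0 + (-2:ℝ)*s*x 1*y 3 + (-1:ℝ)*s*x 1*y 2 + (-1:ℝ)*s*x 1*y 0 + (-3:ℝ)*s*x 0*y 3 + (-2:ℝ)*s*x 0*y 2 + (-1:ℝ)*s*x 0*y 1 := by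
  simp [bF, Bm, Matrix.toLinearMap₂'_apply, Fin.sum_univ_four]
  ring

lemma hm (v : Fin 4 → ℝ) : A *ᵥ v = ![-(v 3), v 0 + 2*v 3, v 1, v 2 + 2*v 3] := by
  funext i
  fin_cases i <;>
    simp [A, Matrix.mulVec, dotProduct, Fin.sum_univ_four]

lemma mem_E_iff (x : Fin 4 → ℝ) : x ∈ E ↔
    (x 0 - x 2 + (s - 1) * x 3 = 0 ∧
     -(s + 1) * x 0 + x 1 + 2 * x 2 + (1 - 2*s) * x 3 = 0 ∧
     x 0 - (s + 1) * x 1 + x 2 + 2 * x 3 = 0 ∧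
     x 1 + (1 - s) * x 2 + (3 - 2*s) * x 3 = 0) := by
  have key : (f ^ 2 - (Real.sqrt 3 + 1) • f + 1 : Module.End ℝ (Fin 4 → ℝ)) x =
      ![x 0 - x 2 + (s - 1) * x 3,
        -(s + 1) * x 0 + x 1 + 2 * x 2 + (1 - 2*s) * x 3,
        x 0 - (s + 1) * x 1 + x 2 + 2 * x 3,
        x 1 + (1 - s) * x 2 + (3 - 2*s) * x 3] := by
    simp only [LinearMap.add_apply, LinearMap.sub_apply, LinearMap.smul_apply,
      Module.End.one_apply, pow_two, Module.End.mul_apply, f, Matrix.mulVecLin_apply, hm, s]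
    funext i
    fin_cases i <;>
      simp [Fin.isValue, Matrix.cons_val_zero, Matrix.cons_val_one, Matrix.head_cons,
        Matrix.cons_val_two, Matrix.tail_cons, Matrix.cons_val_three] <;> ring
  rw [E, LinearMap.mem_ker, key]
  constructor
  · intro h
    exact ⟨congrFun h 0, congrFun h 1, congrFun h 2, congrFun h 3⟩
  · rintro ⟨h0, h1, h2, h3⟩
    funext i
    fin_cases i
    · simpa using h0
    · show _ = (0:ℝ); simp; linear_combination h1
    · show _ = (0:ℝ); simp; linear_combination h2
    · show _ = (0:ℝ); simp; linear_combination h3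

lemma mem_H_iff (x : Fin 4 → ℝ) : x ∈ H ↔
    (x 0 - x 2 - (s + 1) * x 3 = 0 ∧
     (s - 1) * x 0 + x 1 + 2 * x 2 + (1 + 2*s) * x 3 = 0 ∧
     x 0 + (s - 1) * x 1 + x 2 + 2 * x 3 = 0 ∧
     x 1 + (1 + s) * x 2 + (3 + 2*s) * x 3 = 0) := by
  have key : (f ^ 2 + (Real.sqrt 3 - 1) • f + 1 : Module.End ℝ (Fin 4 → ℝ)) x =
      ![x 0 - x 2 - (s + 1) * x 3,
        (s - 1) * x 0 + x 1 + 2 * x 2 + (1 + 2*s) * x 3,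
        x 0 + (s - 1) * x 1 + x 2 + 2 * x 3,
        x 1 + (1 + s) * x 2 + (3 + 2*s) * x 3] := by
    simp only [LinearMap.add_apply, LinearMap.smul_apply,
      Module.End.one_apply, pow_two, Module.End.mul_apply, f, Matrix.mulVecLin_apply, hm, s]
    funext i
    fin_cases i <;>
      simp [Fin.isValue, Matrix.cons_val_zero, Matrix.cons_val_one, Matrix.head_cons,
        Matrix.cons_val_two, Matrix.tail_cons, Matrix.cons_val_three] <;> ring
  rw [H, LinearMap.mem_ker, key]
  constructor
  · intro h
    exact ⟨congrFun h 0, congrFun h 1, congrFun h 2, congrFun h 3⟩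
  · rintro ⟨h0, h1, h2, h3⟩
    funext i
    fin_cases i
    · simpa using h0
    · show _ = (0:ℝ); simp; linear_combination h1
    · show _ = (0:ℝ); simp; linear_combination h2
    · show _ = (0:ℝ); simp; linear_combination h3

noncomputable def e1 : Fin 4 → ℝ := ![1, s-1, 1, 0]
noncomputable def e2 : Fin 4 → ℝ := ![1-s, 2*s-3, 0, 1]

lemma rad_iff (x : Fin 4 → ℝ) : (∀ y, bF x y = 0) ↔ x ∈ E := by
  constructor
  · intro hby
    have g0 : 2*x 0 + (1-s)*x 1 + (2-2*s)*x 2 + (7-3*s)*x 3 = 0 := by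
      have h := hby ![1,0,0,0]
      rw [b_apply] at h
      simp at h
      linear_combination h
    have g1 : (1-s)*x 0 + 2*x 1 + (1-s)*x 2 + (2-2*s)*x 3 = 0 := by
      have h := hby ![0,1,0,0]
      rw [b_apply] at h
      simp at h
      linear_combination h
    have hU0 : x 0 - x 2 + (s-1)*x 3 = 0 := by
      linear_combination (s/3)*g0 + (1/2 - s/6)*g1 + ((2/3:ℝ)*x 3 + (1/2:ℝ)*x 2 + (1/3:ℝ)*x 1 + (-1/6:ℝ)*x 0)*hs
    have hV0 : -(s + 1) * x 0 + x 1 + 2 * x 2 + (1 - 2*s) * x 3 = 0 := by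
      linear_combination (-1/2-s/2)*g0 + ((-3/2:ℝ)*x 3 + (-1:ℝ)*x 2 + (-1/2:ℝ)*x 1)*hs
    rw [mem_E_iff]
    refine ⟨hU0, hV0, ?_, ?_⟩
    · linear_combination (-3-2*s)*hU0 + (-1-s)*hV0 - x 0 * hs
    · linear_combination (1+s)*hU0 + hV0 - x 3 * hs
  · intro hxE y
    rw [mem_E_iff] at hxE
    obtain ⟨h0, h1, -, -⟩ := hxE
    have hx0 : x 0 = x 2 + (1-s)*x 3 := by linear_combination h0
    have hx1 : x 1 = (s-1)*x 2 + (2*s-3)*x 3 := by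
      linear_combination (1+s)*h0 + h1 - x 3 * hs
    rw [b_apply]
    linear_combination ((7:ℝ)*y 3 + (2:ℝ)*y 2 + y 1 + (2:ℝ)*y 0 + (-3:ℝ)*s*y 3 + (-2:ℝ)*s*y 2 + (-1:ℝ)*s*y 1)*hx0 + ((2:ℝ)*y 3 + y 2 + (2:ℝ)*y 1 + y 0 + (-2:ℝ)*s*y 3 + (-1:ℝ)*s*y 2 + (-1:ℝ)*s*y 0)*hx1 + ((-1:ℝ)*x 3*y 3 + x 3*y 1 + (-2:ℝ)*x 3*y 0 + (-2:ℝ)*x 2*y 3 + (-1:ℝ)*x 2*y 2 + (-1:ℝ)*x 2*y 0)*hs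

/-- There is a symmetric, positive semidefinite bilinear form `b` on `ℝ^4` whose radical is
exactly `E`, which is positive definite on `H`, which is invariant under `A`, and which has
rank `2`. -/
theorem stmt_9 :
    ∃ b : LinearMap.BilinForm ℝ (Fin 4 → ℝ),
      b.IsSymm ∧
      (∀ x, 0 ≤ b x x) ∧
      (∀ x, (∀ y, b x y = 0) ↔ x ∈ E) ∧
      (∀ x ∈ H, x ≠ 0 → 0 < b x x) ∧
      (∀ x y, b (f x) (f y) = b x y) ∧
      LinearMap.rank b = 2 := by
  refine ⟨bF, ?_, ?_, fun x => rad_iff x, ?_, ?_, ?_⟩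
  · -- symmetry
    constructor; intro x y
    rw [b_apply, b_apply]
    ring
  · -- psd
    intro x
    have h64 : (0:ℝ) < 6+4*s := by linarith [hs0]
    have key : (6+4*s) * (bF x x) =
        ((6+4*s)*(x 0 - x 2 + (s-1)*x 3)
          + (3+s)*((-1-s)*x 0 + x 1 + 2*x 2 + (1-2*s)*x 3))^2
        + 2*s*((-1-s)*x 0 + x 1 + 2*x 2 + (1-2*s)*x 3)^2 := by
      rw [b_apply]
      linear_combination ((-1:ℝ)*x 3*x 3 + (-4:ℝ)*x 2*x 3 + (-4:ℝ)*x 2*x 2 + (-14:ℝ)*x 1*x 3 + (-4:ℝ)*x 1*x 2 + (-1:ℝ)*x 1*x 1 + (-34:ℝ)*x 0*x 3 + (-8:ℝ)*x 0*x 2 + (2:ℝ)*x 0*x 1 + (-1:ℝ)*x 0*x 0 + (4:ℝ)*s*x 3*x 3 + (8:ℝ)*s*x 2*x 3 + (-4:ℝ)*s*x 1*x 3 + (-14:ℝ)*s*x 0*x 3 + (-4:ℝ)*s*x 0*x 2 + (2:ℝ)*s*x 0*x 1 + (-2:ℝ)*s*x 0*x 0 + (-4:ℝ)*s*s*x 3*x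 3 + (4:ℝ)*s*s*x 0*x 3 + (-1:ℝ)*s*s*x 0*x 0)*hs
    nlinarith [key, h64, hs0,
      sq_nonneg ((6+4*s)*(x 0 - x 2 + (s-1)*x 3)
        + (3+s)*((-1-s)*x 0 + x 1 + 2*x 2 + (1-2*s)*x 3)),
      mul_nonneg hs0 (sq_nonneg ((-1-s)*x 0 + x 1 + 2*x 2 + (1-2*s)*x 3))]
  · -- positive definite on H
    intro x hxH hxne
    rw [mem_H_iff] at hxH
    obtain ⟨h0, h1, -, -⟩ := hxH
    have hx0 : x 0 = x 2 + (1+s)*x 3 := by linear_combination h0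
    have hx1 : x 1 = -(1+s)*x 2 - (3+2*s)*x 3 := by
      linear_combination (1-s)*h0 + h1 - x 3 * hs
    have hbig : (6+4*s)*(144+96*s)*(bF x x) =
        ((144+96*s)*x 2 + (360+216*s)*x 3)^2 + (41472+24192*s)*x 3^2 := by
      rw [b_apply]
      linear_combination ((13824:ℝ)*x 3 + (5184:ℝ)*x 2 + (1728:ℝ)*x 1 + (1728:ℝ)*x 0 + (14976:ℝ)*s*x 3 + (3456:ℝ)*s*x 2 + (576:ℝ)*s*x 1 + (2304:ℝ)*s*x 0 + (1536:ℝ)*s*s*x 3 + (-2304:ℝ)*s*s*x 2 + (-1536:ℝ)*s*s*x 1 + (768:ℝ)*s*s*x 0 + (-1536:ℝ)*s*s*s*x 3 + (-1536:ℝ)*s*s*s*x 2 + (-768:ℝ)*s*s*s*x 1)*hx0 + ((1728:ℝ)*x 2 + (1728:ℝ)*x 1 + (-6912:ℝ)*s*x 3 + (-2880:ℝ)*s*x 2 + (2304:ℝ)*s*x 1 + (-10944:ℝ)*s*s*x 3 + (-6144:ℝ)*s*s*x 2 + (768:ℝ)*s*s*x 1 + (-5376:ℝ)*s*s*s*x 3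 + (-2304:ℝ)*s*s*s*x 2 + (-768:ℝ)*s*s*s*s*x 3)*hx1 + ((51840:ℝ)*x 3*x 3 + (29376:ℝ)*x 2*x 3 + (5184:ℝ)*x 2*x 2 + (42624:ℝ)*s*x 3*x 3 + (31680:ℝ)*s*x 2*x 3 + (6912:ℝ)*s*x 2*x 2 + (11520:ℝ)*s*s*x 3*x 3 + (9216:ℝ)*s*s*x 2*x 3 + (2304:ℝ)*s*s*x 2*x 2 + (1536:ℝ)*s*s*s*x 3*x 3 + (768:ℝ)*s*s*s*x 2*x 3)*hs
    have h64 : (0:ℝ) < 6+4*s := by linarith [hs0]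
    have h144 : (0:ℝ) < 144+96*s := by linarith [hs0]
    have hpos : (0:ℝ) < (6+4*s)*(144+96*s) := mul_pos h64 h144
    rcases eq_or_ne (x 3) 0 with h3z | h3z
    · rcases eq_or_ne (x 2) 0 with h2z | h2z
      · exfalso
        apply hxne
        funext i
        fin_cases i
        · show x 0 = 0; rw [hx0, h2z, h3z]; ring
        · show x 1 = 0; rw [hx1, h2z, h3z]; ring
        · exact h2z
        · exact h3z
      · have h2sq : (0:ℝ) < x 2^2 :=
          lt_of_le_of_ne (sq_nonneg _) (Ne.symm (pow_ne_zero 2 h2z))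
        have h144sq : (0:ℝ) < (144+96*s)^2 := by positivity
        rw [h3z] at hbig
        nlinarith [hbig, hpos, mul_pos h144sq h2sq]
    · have h3sq : (0:ℝ) < x 3^2 :=
        lt_of_le_of_ne (sq_nonneg _) (Ne.symm (pow_ne_zero 2 h3z))
      have hdet : (0:ℝ) < 41472+24192*s := by linarith [hs0]
      nlinarith [hbig, hpos, sq_nonneg ((144+96*s)*x 2 + (360+216*s)*x 3),
        mul_pos hdet h3sq]
  · -- invariance
    intro x y
    have hfx : f x = ![-(x 3), x 0 + 2*x 3, x 1, x 2 + 2*x 3] := by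
      simp only [f, Matrix.mulVecLin_apply]; exact hm x
    have hfy : f y = ![-(y 3), y 0 + 2*y 3, y 1, y 2 + 2*y 3] := by
      simp only [f, Matrix.mulVecLin_apply]; exact hm y
    rw [hfx, hfy, b_apply, b_apply]
    simp only [Matrix.cons_val_zero, Matrix.cons_val_one, Matrix.head_cons,
      Matrix.cons_val_two, Matrix.tail_cons, Matrix.cons_val_three]
    ring
  · -- rank
    have hkerEq : LinearMap.ker bF = E := by
      ext x
      rw [LinearMap.mem_ker]
      constructor
      · intro h
        exact (rad_iff x).mp (fun y => by rw [h]; rfl)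
      · intro h
        exact LinearMap.ext fun y => (rad_iff x).mpr h y
    have li : LinearIndependent ℝ ![e1, e2] := by
      rw [LinearIndependent.pair_iff]
      intro a b hab
      have h2 := congrFun hab 2
      have h3 := congrFun hab 3
      simp [e1, e2] at h2 h3
      constructor
      · linarith [h2]
      · linarith [h3]
    have hspan : E = Submodule.span ℝ (Set.range ![e1, e2]) := by
      apply le_antisymm
      · intro x hx
        rw [mem_E_iff] at hx
        obtain ⟨h0, h1, -, -⟩ := hx
        have hx0 : x 0 = x 2 + (1-s)*x 3 := by linear_combination h0
        have hx1 : x 1 = (s-1)*x 2 + (2*s-3)*x 3 := by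
          linear_combination (1+s)*h0 + h1 - x 3 * hs
        have hxe : x = x 2 • e1 + x 3 • e2 := by
          funext i
          fin_cases i
          · show x 0 = x 2 * e1 0 + x 3 * e2 0
            simp [e1, e2]; linear_combination hx0
          · show x 1 = x 2 * e1 1 + x 3 * e2 1
            simp [e1, e2]; linear_combination hx1
          · show x 2 = x 2 * e1 2 + x 3 * e2 2
            simp [e1, e2]
          · show x 3 = x 2 * e1 3 + x 3 * e2 3
            simp [e1, e2]
        rw [hxe]
        exact add_mem (Submodule.smul_mem _ _ (Submodule.subset_span ⟨0, rfl⟩))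
          (Submodule.smul_mem _ _ (Submodule.subset_span ⟨1, rfl⟩))
      · rw [Submodule.span_le]
        rintro v ⟨i, rfl⟩
        fin_cases i
        · show e1 ∈ (E : Set (Fin 4 → ℝ))
          rw [SetLike.mem_coe, mem_E_iff]
          refine ⟨?_, ?_, ?_, ?_⟩ <;> simp [e1] <;>
            first
            | linear_combination hs
            | linear_combination -hs
            | linear_combination 2*hs
            | linear_combination -2*hs
            | ring
        · show e2 ∈ (E : Set (Fin 4 → ℝ))
          rw [SetLike.mem_coe, mem_E_iff]
          refine ⟨?_, ?_, ?_, ?_⟩ <;> simp [e2] <;>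
            first
            | linear_combination hs
            | linear_combination -hs
            | linear_combination 2*hs
            | linear_combination -2*hs
            | ring
    have hE2 : Module.finrank ℝ E = 2 := by
      rw [hspan, finrank_span_eq_card li]
      simp
    have hrn := LinearMap.finrank_range_add_finrank_ker bF
    rw [hkerEq, hE2] at hrn
    have h4 : Module.finrank ℝ (Fin 4 → ℝ) = 4 := by simp
    rw [h4] at hrn
    have hr2 : Module.finrank ℝ (LinearMap.range bF) = 2 := by omega
    have heq : LinearMap.rank bF = Module.rank ℝ (LinearMap.range bF) := rfl
    rw [heq, ← Module.finrank_eq_rank' (K := ℝ) (V := ↥(LinearMap.range bF)), hr2]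
    norm_num
end

section
/- There exists a symmetric bilinear form b̃ on ℝ^5 = ℝ^4 × ℝ which is positive semidefinite of rank 3 and which is invariant under the linear map (x, t) ↦ (A^k x, t) for every integer k, where A is the companion matrix of X^4 - 2X^3 - 2X + 1; namely b̃((x,s),(y,t)) = b(x,y) + s·t for a rank-2 positive semidefinite A-invariant form b on ℝ^4. -/
open Matrix

noncomputable section

def rt : ℝ := Real.sqrt 3

def vv : Fin 4 → ℝ := ![1, (1-rt)/2, 1-rt, (7-3*rt)/2]
def uu : Fin 4 → ℝ := ![0, 1, 1-rt, 3-2*rt]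

def dp (w : Fin 4 → ℝ) : (Fin 4 → ℝ) →ₗ[ℝ] ℝ where
  toFun x := w ⬝ᵥ x
  map_add' x y := by simp [dotProduct, mul_add, Finset.sum_add_distrib]
  map_smul' c x := by
    simp only [Pi.smul_apply, smul_eq_mul, dotProduct, Finset.mul_sum, RingHom.id_apply]
    exact Finset.sum_congr rfl fun i _ => by ring

def outer {E : Type*} [AddCommGroup E] [Module ℝ E] (φ : E →ₗ[ℝ] ℝ) :
    LinearMap.BilinForm ℝ E := φ.smulRight φ

lemma outer_apply {E : Type*} [AddCommGroup E] [Module ℝ E] (φ : E →ₗ[ℝ] ℝ) (x y : E) :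
    outer φ x y = φ x * φ y := by simp [outer, smul_eq_mul]


def fL : (Fin 4 → ℝ) →ₗ[ℝ] ℝ := dp vv
def gL : (Fin 4 → ℝ) →ₗ[ℝ] ℝ := dp uu

def bB : LinearMap.BilinForm ℝ (Fin 4 → ℝ) := outer fL + (rt/2) • outer gL

lemma bB_apply (x y : Fin 4 → ℝ) :
    bB x y = fL x * fL y + (rt/2) * (gL x * gL y) := by
  simp [bB, outer, smul_eq_mul]

lemma h3 : rt * rt = 3 := Real.mul_self_sqrt (by norm_num)

lemma fL_A (x : Fin 4 → ℝ) : fL (A *ᵥ x) = (1-rt)/2 * fL x - rt/2 * gL x := by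
  simp only [fL, gL, dp, LinearMap.coe_mk, AddHom.coe_mk, A, vv, uu, dotProduct, mulVec,
    Fin.sum_univ_four]
  simp [Matrix.cons_val_zero, Matrix.cons_val_one, Matrix.vecHead, Matrix.vecTail, Function.comp]
  linear_combination (-(x 1)/4 - (x 2) - 7*(x 3)/4) * h3

lemma gL_A (x : Fin 4 → ℝ) : gL (A *ᵥ x) = fL x + (1-rt)/2 * gL x := by
  simp only [fL, gL, dp, LinearMap.coe_mk, AddHom.coe_mk, A, vv, uu, dotProduct, mulVec,
    Fin.sum_univ_four]
  simp [Matrix.cons_val_zero, Matrix.cons_val_one, Matrix.vecHead, Matrix.vecTail, Function.comp]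
  linear_combination (-(x 2)/2 - (x 3)) * h3

lemma bB_inv (x y : Fin 4 → ℝ) : bB (A *ᵥ x) (A *ᵥ y) = bB x y := by
  rw [bB_apply, bB_apply, fL_A, fL_A, gL_A, gL_A]
  linear_combination ((fL x * fL y)/4 + rt*(gL x * gL y)/8) * h3

def e0 : Fin 4 → ℝ := ![1,0,0,0]
def x1 : Fin 4 → ℝ := ![(rt-1)/2, 1, 0, 0]

lemma fL_e0 : fL e0 = 1 := by
  simp [fL, dp, vv, e0, dotProduct, Fin.sum_univ_four]
lemma gL_e0 : gL e0 = 0 := by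
  simp [gL, dp, uu, e0, dotProduct, Fin.sum_univ_four]
lemma fL_x1 : fL x1 = 0 := by
  simp [fL, dp, vv, x1, dotProduct, Fin.sum_univ_four]; ring
lemma gL_x1 : gL x1 = 1 := by
  simp [gL, dp, uu, x1, dotProduct, Fin.sum_univ_four]

lemma rt_pos : 0 < rt := Real.sqrt_pos.2 (by norm_num)

lemma bB_eq (x : Fin 4 → ℝ) : bB x = fL x • fL + ((rt/2) * gL x) • gL := by
  ext y; simp [bB, outer, smul_eq_mul]; ring

lemma range_bB : LinearMap.range bB = Submodule.span ℝ (Set.range ![fL, gL]) := by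
  apply le_antisymm
  · rintro φ ⟨x, rfl⟩
    rw [bB_eq]
    exact Submodule.add_mem _ (Submodule.smul_mem _ _ (Submodule.subset_span ⟨0, rfl⟩))
      (Submodule.smul_mem _ _ (Submodule.subset_span ⟨1, rfl⟩))
  · rw [Submodule.span_le]
    rintro φ ⟨i, rfl⟩
    fin_cases i
    · exact ⟨e0, by rw [bB_eq]; simp [fL_e0, gL_e0]⟩
    · refine ⟨(2/rt) • x1, ?_⟩
      rw [_root_.map_smul, bB_eq, fL_x1, gL_x1]
      have hrt := rt_pos.ne'
      simp only [smul_add, smul_smul, mul_one, zero_smul, zero_add]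
      rw [show (2/rt) * (rt/2) = 1 by field_simp]
      simp

lemma li2 : LinearIndependent ℝ ![fL, gL] := by
  rw [LinearIndependent.pair_iff]
  intro s t hst
  have h0 := congrFun (congrArg DFunLike.coe hst) e0
  have h1 := congrFun (congrArg DFunLike.coe hst) x1
  simp [fL_e0, gL_e0] at h0
  simp [fL_x1, gL_x1] at h1
  exact ⟨h0, h1⟩

lemma rank_bB : LinearMap.rank bB = 2 := by
  rw [LinearMap.rank, range_bB, rank_span li2, Cardinal.mk_range_eq _ li2.injective]
  simp

def F1 : ((Fin 4 → ℝ) × ℝ) →ₗ[ℝ] ℝ := fL.comp (LinearMap.fst ℝ (Fin 4 → ℝ) ℝ)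
def F2 : ((Fin 4 → ℝ) × ℝ) →ₗ[ℝ] ℝ := gL.comp (LinearMap.fst ℝ (Fin 4 → ℝ) ℝ)
def F3 : ((Fin 4 → ℝ) × ℝ) →ₗ[ℝ] ℝ := LinearMap.snd ℝ (Fin 4 → ℝ) ℝ

def btB : LinearMap.BilinForm ℝ ((Fin 4 → ℝ) × ℝ) :=
  outer F1 + (rt/2) • outer F2 + outer F3

lemma btB_apply (x y : Fin 4 → ℝ) (s t : ℝ) :
    btB (x, s) (y, t) = bB x y + s * t := by
  simp [btB, outer, F1, F2, F3, bB_apply, smul_eq_mul]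

lemma btB_eq (p : (Fin 4 → ℝ) × ℝ) :
    btB p = F1 p • F1 + ((rt/2) * F2 p) • F2 + F3 p • F3 := by
  refine LinearMap.ext fun q => ?_
  simp [btB, outer, smul_eq_mul]; ring

lemma F_vals :
    F1 (e0, (0:ℝ)) = 1 ∧ F2 (e0, (0:ℝ)) = 0 ∧ F3 (e0, (0:ℝ)) = 0 ∧
    F1 (x1, (0:ℝ)) = 0 ∧ F2 (x1, (0:ℝ)) = 1 ∧ F3 (x1, (0:ℝ)) = 0 ∧
    F1 ((0:Fin 4 → ℝ), (1:ℝ)) = 0 ∧ F2 ((0:Fin 4 → ℝ), (1:ℝ)) = 0 ∧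
      F3 ((0:Fin 4 → ℝ), (1:ℝ)) = 1 := by
  refine ⟨?_, ?_, ?_, ?_, ?_, ?_, ?_, ?_, ?_⟩ <;>
    simp [F1, F2, F3, fL_e0, gL_e0, fL_x1, gL_x1]

lemma range_btB : LinearMap.range btB = Submodule.span ℝ (Set.range ![F1, F2, F3]) := by
  apply le_antisymm
  · rintro φ ⟨p, rfl⟩
    rw [btB_eq]
    exact Submodule.add_mem _
      (Submodule.add_mem _ (Submodule.smul_mem _ _ (Submodule.subset_span ⟨0, rfl⟩))
        (Submodule.smul_mem _ _ (Submodule.subset_span ⟨1, rfl⟩)))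
      (Submodule.smul_mem _ _ (Submodule.subset_span ⟨2, rfl⟩))
  · rw [Submodule.span_le]
    rintro φ ⟨i, rfl⟩
    obtain ⟨h1, h2, h3', h4, h5, h6, h7, h8, h9⟩ := F_vals
    fin_cases i
    · exact ⟨(e0, 0), by rw [btB_eq]; simp [h1, h2, h3']⟩
    · refine ⟨(2/rt) • ((x1, (0:ℝ))), ?_⟩
      rw [_root_.map_smul, btB_eq, h4, h5, h6]
      have hrt := rt_pos.ne'
      simp only [smul_add, smul_smul, mul_one, zero_smul, zero_add, add_zero]
      rw [show (2/rt) * (rt/2) = 1 by field_simp]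
      simp
    · exact ⟨((0:Fin 4 → ℝ), 1), by rw [btB_eq]; simp [h7, h8, h9]⟩

lemma li3 : LinearIndependent ℝ ![F1, F2, F3] := by
  rw [Fintype.linearIndependent_iff]
  intro g hg
  obtain ⟨h1, h2, h3', h4, h5, h6, h7, h8, h9⟩ := F_vals
  simp only [Fin.sum_univ_three, Matrix.cons_val_zero, Matrix.cons_val_one, Matrix.head_cons,
    Matrix.cons_val_two, Matrix.tail_cons] at hg
  have e1 := congrFun (congrArg DFunLike.coe hg) (e0, (0:ℝ))
  have e2 := congrFun (congrArg DFunLike.coe hg) (x1, (0:ℝ))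
  have e3 := congrFun (congrArg DFunLike.coe hg) ((0:Fin 4 → ℝ), (1:ℝ))
  simp [h1, h2, h3'] at e1
  simp [h4, h5, h6] at e2
  simp [h7, h8, h9] at e3
  intro i
  fin_cases i <;> assumption

lemma rank_btB : LinearMap.rank btB = 3 := by
  rw [LinearMap.rank, range_btB, rank_span li3, Cardinal.mk_range_eq _ li3.injective]
  simp

lemma detA : IsUnit (A.det) := by
  have : A.det = 1 := by
    simp [A, Matrix.det_succ_row_zero, Fin.sum_univ_succ, Fin.succAbove]
    norm_num
  rw [this]; exact isUnit_one

lemma bB_inv_pow (n : ℕ) (x y : Fin 4 → ℝ) : bB ((A ^ n) *ᵥ x) ((A ^ n) *ᵥ y) = bB x y := by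
  induction n generalizing x y with
  | zero => simp
  | succ n ih =>
    rw [pow_succ, ← Matrix.mulVec_mulVec, ← Matrix.mulVec_mulVec, ih, bB_inv]

lemma bB_inv_zpow (k : ℤ) (x y : Fin 4 → ℝ) : bB ((A ^ k) *ᵥ x) ((A ^ k) *ᵥ y) = bB x y := by
  obtain n | n := k
  · simpa [zpow_natCast] using bB_inv_pow n x y
  · rw [zpow_negSucc]
    have hmul : A ^ (n+1) * (A ^ (n+1))⁻¹ = 1 :=
      Matrix.mul_nonsing_inv _ (by simpa [Matrix.det_pow] using detA.pow (n+1))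
    have := bB_inv_pow (n+1) ((A ^ (n+1))⁻¹ *ᵥ x) ((A ^ (n+1))⁻¹ *ᵥ y)
    rw [Matrix.mulVec_mulVec, Matrix.mulVec_mulVec, hmul, Matrix.one_mulVec,
      Matrix.one_mulVec] at this
    exact this.symm

end

/-- There is a symmetric positive semidefinite bilinear form `b̃` of rank `3` on
`ℝ^5 = ℝ^4 × ℝ`, invariant under `(x, t) ↦ (A^k x, t)` for every integer `k`; namely
`b̃((x,s),(y,t)) = b(x,y) + s·t` for a rank-2 positive semidefinite `A`-invariant symmetric
bilinear form `b` on `ℝ^4`. -/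
theorem stmt_10 :
    ∃ (b : LinearMap.BilinForm ℝ (Fin 4 → ℝ))
      (bt : LinearMap.BilinForm ℝ ((Fin 4 → ℝ) × ℝ)),
      bt.IsSymm ∧
      (∀ p, 0 ≤ bt p p) ∧
      LinearMap.rank bt = 3 ∧
      (∀ k : ℤ, ∀ p q : (Fin 4 → ℝ) × ℝ,
        bt ((A ^ k) *ᵥ p.1, p.2) ((A ^ k) *ᵥ q.1, q.2) = bt p q) ∧
      (∀ x y : Fin 4 → ℝ, ∀ s t : ℝ, bt (x, s) (y, t) = b x y + s * t) ∧
      b.IsSymm ∧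
      (∀ x, 0 ≤ b x x) ∧
      LinearMap.rank b = 2 ∧
      (∀ x y, b (A *ᵥ x) (A *ᵥ y) = b x y) := by
  refine ⟨bB, btB, ?_, ?_, rank_btB, ?_, fun x y s t => btB_apply x y s t, ?_, ?_,
    rank_bB, bB_inv⟩
  · refine ⟨?_⟩
    rintro ⟨x, s⟩ ⟨y, t⟩
    simp only [btB_apply, bB_apply, RingHom.id_apply]
    ring
  · rintro ⟨x, s⟩
    rw [btB_apply, bB_apply]
    nlinarith [mul_self_nonneg (fL x), mul_self_nonneg (gL x), mul_self_nonneg s,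
      mul_nonneg rt_pos.le (mul_self_nonneg (gL x))]
  · intro k p q
    rw [btB_apply, btB_apply, bB_inv_zpow]
  · refine ⟨?_⟩
    intro x y
    simp only [bB_apply, RingHom.id_apply]
    ring
  · intro x
    rw [bB_apply]
    nlinarith [mul_self_nonneg (fL x), mul_self_nonneg (gL x),
      mul_nonneg rt_pos.le (mul_self_nonneg (gL x))]
end
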